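/- Assume conditions (9) for the parameters k1, n1, e1, p1, s1, w1, h1, and let k2, n2, e2 be real numbers satisfying V̂2 = 0 and V̂3 = 0. Set δ := (8n2² − 6n2 + 1)·k2² + 2 and ρ := δ·k1²·n1² + (2n2 − 1)·k2², and assume δ ≠ 0 and ρ ≠ 0. Define A1(x,y) = 2k1²n1²·((2n2−1)²·k2² + 1)·δ·x + k2²·(2n2−1)·((8n2²−6n2+1)·k1²·k2²·n1² + 2k1²n1² + (2n2−1)·k2²)·y + 2k2²·(2n2−1)·((2n2−1)²·k2² + 1), B1 = −2k1²n1²·((2n2−1)²·k2² + 1)/ρ, C1 = −(2n2−1)·k2²/δ, and H1(x,y) = A1(x,y)·x^(B1)·y^(C1) (real powers). Then H1 is a first integral of the competitive system Z1 on the open first quadrant: for all x > 0 and y > 0, (∂H1/∂x)(x,y)·x·(k1·(1−n1·x) − e1·y − w1) + (∂H1/∂y)(x,y)·y·(e1·p1·x − s1·y − h1) = 0. (This is the left-zone Σ-first integral used in the sufficiency part of Theorem 3.1.) -/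

import Mathlib

open Real

/-- The left-zone Darboux Σ-first integral `H1(x,y) = A1(x,y)·x^(B1)·y^(C1)` used in the
sufficiency part of Theorem 3.1, with `δ = (8n2²−6n2+1)·k2² + 2` and
`ρ = δ·k1²·n1² + (2n2−1)·k2²`. -/
noncomputable def H1fun (k1 n1 k2 n2 : ℝ) (x y : ℝ) : ℝ :=
  (2 * k1 ^ 2 * n1 ^ 2 * ((2 * n2 - 1) ^ 2 * k2 ^ 2 + 1)
      * ((8 * n2 ^ 2 - 6 * n2 + 1) * k2 ^ 2 + 2) * x
    + k2 ^ 2 * (2 * n2 - 1)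
      * ((8 * n2 ^ 2 - 6 * n2 + 1) * k1 ^ 2 * k2 ^ 2 * n1 ^ 2
          + 2 * k1 ^ 2 * n1 ^ 2 + (2 * n2 - 1) * k2 ^ 2) * y
    + 2 * k2 ^ 2 * (2 * n2 - 1) * ((2 * n2 - 1) ^ 2 * k2 ^ 2 + 1))
  * x ^ (-(2 * k1 ^ 2 * n1 ^ 2 * ((2 * n2 - 1) ^ 2 * k2 ^ 2 + 1))
      / (((8 * n2 ^ 2 - 6 * n2 + 1) * k2 ^ 2 + 2) * k1 ^ 2 * n1 ^ 2
          + (2 * n2 - 1) * k2 ^ 2))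
  * y ^ (-((2 * n2 - 1) * k2 ^ 2) / ((8 * n2 ^ 2 - 6 * n2 + 1) * k2 ^ 2 + 2))

private lemma hasDeriv_aux (p q B K : ℝ) {x : ℝ} (hx : x ≠ 0) :
    HasDerivAt (fun s : ℝ => (p * s + q) * s ^ B * K)
      ((p * x ^ B + (p * x + q) * (B * x ^ (B - 1))) * K) x := by
  have h1 : HasDerivAt (fun s : ℝ => p * s + q) p x := by
    simpa using ((hasDerivAt_id x).const_mul p).add_const q
  have h2 : HasDerivAt (fun s : ℝ => s ^ B) (B * x ^ (B - 1)) x :=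
    Real.hasDerivAt_rpow_const (Or.inl hx)
  exact (h1.mul h2).mul_const K

set_option maxHeartbeats 2000000 in
private lemma hEaux (m e1 e2 k2 n2 x y : ℝ)
    (hV2 : 4 * (e2 + k2 * n2 - k2) * k2 * n2 - (m + e1) * m + (k2 - e2) * k2 = 0)
    (hV3 : k2 ^ 3 * (2 * n2 - 1) ^ 3 + e2 * k2 ^ 2 * (4 * n2 - 1) * (2 * n2 - 1)
        + k2 * (2 * n2 - 1) + 2 * e2 = 0) :
    (((((8 * n2 ^ 2 - 6 * n2 + 1) * k2 ^ 2 + 2) * m ^ 2 + (2 * n2 - 1) * k2 ^ 2) * (2 * m ^ 2 * ((2 * n2 - 1) ^ 2 * k2 ^ 2 + 1) * ((8 * n2 ^ 2 - 6 * n2 + 1) * k2 ^ 2 + 2)) * x - ((2 * m ^ 2 * ((2 * n2 - 1) ^ 2 * k2 ^ 2 + 1) * ((8 * n2 ^ 2 - 6 * n2 + 1) * k2 ^ 2 + 2)) * x + (k2 ^ 2 * (2 * n2 - 1) * ((8 * n2 ^ 2 - 6 * n2 + 1) * m ^ 2 * k2 ^ 2 + 2 * m ^ 2 + (2 * n2 -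 1) * k2 ^ 2)) * y + (2 * k2 ^ 2 * (2 * n2 - 1) * ((2 * n2 - 1) ^ 2 * k2 ^ 2 + 1))) * (2 * m ^ 2 * ((2 * n2 - 1) ^ 2 * k2 ^ 2 + 1))) * ((8 * n2 ^ 2 - 6 * n2 + 1) * k2 ^ 2 + 2) * e1 * (m + e1 - m * x - e1 * y) + (((8 * n2 ^ 2 - 6 * n2 + 1) * k2 ^ 2 + 2) * (k2 ^ 2 * (2 * n2 - 1) * ((8 * n2 ^ 2 - 6 * n2 + 1) * m ^ 2 * k2 ^ 2 + 2 * m ^ 2 + (2 * n2 - 1) * k2 ^ 2)) * y - ((2 * m ^ 2 * ((2 * n2 - 1) ^ 2 * k2 ^ 2 + 1) * ((8 * n2 ^ 2 - 6 * n2 + 1) * k2 ^ 2 + 2)) * x + (k2 ^ 2 * (2 * n2 - 1) * ((8 * n2 ^ 2 - 6 * n2 + 1) * m ^ 2 * k2 ^ 2 + 2 * m ^ 2 + (2 * n2 - 1) * k2 ^ 2)) * y + (2 * k2 ^ 2 * (2 * n2 - 1) * ((2 * n2 - 1) ^ 2 * k2 ^ 2 + 1))) * ((2 * n2 - 1) *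 k2 ^ 2)) * (((8 * n2 ^ 2 - 6 * n2 + 1) * k2 ^ 2 + 2) * m ^ 2 + (2 * n2 - 1) * k2 ^ 2) * (m ^ 2 * x + x + e1 * m * y - (m ^ 2 + e1 * m + 1))) = 0 := by
  have hW : (1:ℝ) * k2^2 + (-2:ℝ) * k2^2 * n2 + (-2:ℝ) * m * e1 + (-1:ℝ) * m * e1 * k2^2 + (6:ℝ) * m * e1 * k2^2 * n2 + (-8:ℝ) * m * e1 * k2^2 * n2^2 + (-2:ℝ) * m^2 + (-1:ℝ) * m^2 * k2^2 + (6:ℝ) * m^2 * k2^2 * n2 + (-8:ℝ) * m^2 * k2^2 * n2^2 = 0 := by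
    linear_combination ((8 * n2 ^ 2 - 6 * n2 + 1) * k2 ^ 2 + 2) * hV2 - k2 * (4 * n2 - 1) * hV3
  linear_combination (2 * k2 ^ 2 * (2 * n2 - 1) * ((2 * n2 - 1) ^ 2 * k2 ^ 2 + 1)
      * ((1:ℝ) * k2^2 + (-1:ℝ) * k2^2 * y + (-1:ℝ) * k2^2 * x + (1:ℝ) * k2^2 * x * y + (-2:ℝ) * k2^2 * n2 + (2:ℝ) * k2^2 * n2 * y + (2:ℝ) * k2^2 * n2 * x + (-2:ℝ) * k2^2 * n2 * x * y + (2:ℝ) * m * e1 + (-2:ℝ) * m * e1 * y + (-2:ℝ) * m * e1 * x + (2:ℝ) * m * e1 * x * y + (2:ℝ) * m * e1 * k2^2 + (-3:ℝ) * m * e1 * k2^2 * y + (1:ℝ) * m * e1 * k2^2 * y^2 + (-1:ℝ) * m * e1 * k2^2 * x + (1:ℝ) * m * e1 * k2^2 * x * y + (-8:ℝ) * m * e1 * k2^2 * n2 + (10:ℝ) * m * e1 * k2^2 * n2 * y + (-2:ℝ) * m * e1 * k2^2 * n2 * y^2 + (6:ℝ) * m * e1 * k2^2 * n2 * x + (-6:ℝ)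 * m * e1 * k2^2 * n2 * x * y + (8:ℝ) * m * e1 * k2^2 * n2^2 + (-8:ℝ) * m * e1 * k2^2 * n2^2 * y + (-8:ℝ) * m * e1 * k2^2 * n2^2 * x + (8:ℝ) * m * e1 * k2^2 * n2^2 * x * y + (2:ℝ) * m^2 * y + (-2:ℝ) * m^2 * x + (-2:ℝ) * m^2 * x * y + (2:ℝ) * m^2 * x^2 + (1:ℝ) * m^2 * k2^2 + (-2:ℝ) * m^2 * k2^2 * x + (1:ℝ) * m^2 * k2^2 * x^2 + (-2:ℝ) * m^2 * k2^2 * n2 + (-4:ℝ) * m^2 * k2^2 * n2 * y + (8:ℝ) * m^2 * k2^2 * n2 * x + (4:ℝ) * m^2 * k2^2 * n2 * x * y + (-6:ℝ) * m^2 * k2^2 * n2 * x^2 + (8:ℝ) * m^2 * k2^2 * n2^2 * y + (-8:ℝ) * m^2 * k2^2 * n2^2 * x + (-8:ℝ) * m^2 * k2^2 * n2^2 * x * y + (8:ℝ) * m^2 * k2^2 * n2^2 * x^2 + (2:ℝ) * m^3 * e1 * y + (-2:ℝ) * m^3 * e1 * y^2 + (-2:ℝ) * m^3 * e1 * x + (2:ℝ)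 * m^3 * e1 * x * y + (1:ℝ) * m^3 * e1 * k2^2 * y + (-1:ℝ) * m^3 * e1 * k2^2 * y^2 + (-1:ℝ) * m^3 * e1 * k2^2 * x + (1:ℝ) * m^3 * e1 * k2^2 * x * y + (-6:ℝ) * m^3 * e1 * k2^2 * n2 * y + (6:ℝ) * m^3 * e1 * k2^2 * n2 * y^2 + (6:ℝ) * m^3 * e1 * k2^2 * n2 * x + (-6:ℝ) * m^3 * e1 * k2^2 * n2 * x * y + (8:ℝ) * m^3 * e1 * k2^2 * n2^2 * y + (-8:ℝ) * m^3 * e1 * k2^2 * n2^2 * y^2 + (-8:ℝ) * m^3 * e1 * k2^2 * n2^2 * x + (8:ℝ) * m^3 * e1 * k2^2 * n2^2 * x * y + (2:ℝ) * m^4 * y + (-2:ℝ) * m^4 * x + (-2:ℝ) * m^4 * x * y + (2:ℝ) * m^4 * x^2 + (1:ℝ) * m^4 * k2^2 * y + (-1:ℝ) * m^4 * k2^2 * x + (-1:ℝ) * m^4 * k2^2 * x * y + (1:ℝ) * m^4 * k2^2 * x^2 + (-6:ℝ) * m^4 * k2^2 * n2 * y + (6:ℝ) * m^4 * k2^2 *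 n2 * x + (6:ℝ) * m^4 * k2^2 * n2 * x * y + (-6:ℝ) * m^4 * k2^2 * n2 * x^2 + (8:ℝ) * m^4 * k2^2 * n2^2 * y + (-8:ℝ) * m^4 * k2^2 * n2^2 * x + (-8:ℝ) * m^4 * k2^2 * n2^2 * x * y + (8:ℝ) * m^4 * k2^2 * n2^2 * x^2)) * hW

set_option maxHeartbeats 4000000 in
set_option maxRecDepth 100000 in
/-- Under conditions (9) and the piecewise center conditions `V̂2 = V̂3 = 0` (with
`δ ≠ 0`, `ρ ≠ 0`), `H1` is a first integral of the competitive system `Z1` on the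
open first quadrant. -/
theorem stmt16 (k1 n1 e1 p1 s1 w1 h1 k2 n2 e2 : ℝ)
    (he : e1 ≠ 0)
    (hh : h1 = (k1 ^ 2 * n1 ^ 2 + e1 * k1 * n1 + 1) / e1)
    (hp : p1 = (k1 ^ 2 * n1 ^ 2 + 1) / e1 ^ 2)
    (hs : s1 = -(k1 * n1))
    (hw : w1 = -(k1 * n1) - e1 + k1)
    (hV2 : 4 * (e2 + k2 * n2 - k2) * k2 * n2 - (k1 * n1 + e1) * k1 * n1
        + (k2 - e2) * k2 = 0)
    (hV3 : k2 ^ 3 * (2 * n2 - 1) ^ 3 + e2 * k2 ^ 2 * (4 * n2 - 1) * (2 * n2 - 1)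
        + k2 * (2 * n2 - 1) + 2 * e2 = 0)
    (hδ : (8 * n2 ^ 2 - 6 * n2 + 1) * k2 ^ 2 + 2 ≠ 0)
    (hρ : ((8 * n2 ^ 2 - 6 * n2 + 1) * k2 ^ 2 + 2) * k1 ^ 2 * n1 ^ 2
        + (2 * n2 - 1) * k2 ^ 2 ≠ 0) :
    ∀ x y : ℝ, 0 < x → 0 < y →
      deriv (fun s => H1fun k1 n1 k2 n2 s y) x
          * (x * (k1 * (1 - n1 * x) - e1 * y - w1))
        + deriv (fun s => H1fun k1 n1 k2 n2 x s) y
          * (y * (e1 * p1 * x - s1 * y - h1)) = 0 := by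
  intro x y hx hy
  have hx0 : x ≠ 0 := ne_of_gt hx
  have hy0 : y ≠ 0 := ne_of_gt hy
  have hdx : deriv (fun s => H1fun k1 n1 k2 n2 s y) x
      = ((2 * k1 ^ 2 * n1 ^ 2 * ((2 * n2 - 1) ^ 2 * k2 ^ 2 + 1) * ((8 * n2 ^ 2 - 6 * n2 + 1) * k2 ^ 2 + 2)) * x ^ (-(2 * k1 ^ 2 * n1 ^ 2 * ((2 * n2 - 1) ^ 2 * k2 ^ 2 + 1)) / (((8 * n2 ^ 2 - 6 * n2 + 1) * k2 ^ 2 + 2) * k1 ^ 2 * n1 ^ 2 + (2 * n2 - 1) * k2 ^ 2)) + ((2 * k1 ^ 2 * n1 ^ 2 * ((2 * n2 - 1) ^ 2 * k2 ^ 2 + 1) * ((8 * n2 ^ 2 - 6 * n2 + 1) * k2 ^ 2 + 2)) * x + ((k2 ^ 2 * (2 * n2 - 1) * ((8 * n2 ^ 2 - 6 * n2 + 1) * k1 ^ 2 * k2 ^ 2 * n1 ^ 2 + 2 * k1 ^ 2 * n1 ^ 2 + (2 * n2 - 1) * k2 ^ 2)) * y + (2 * k2 ^ 2 * (2 * n2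 - 1) * ((2 * n2 - 1) ^ 2 * k2 ^ 2 + 1)))) * ((-(2 * k1 ^ 2 * n1 ^ 2 * ((2 * n2 - 1) ^ 2 * k2 ^ 2 + 1)) / (((8 * n2 ^ 2 - 6 * n2 + 1) * k2 ^ 2 + 2) * k1 ^ 2 * n1 ^ 2 + (2 * n2 - 1) * k2 ^ 2)) * x ^ ((-(2 * k1 ^ 2 * n1 ^ 2 * ((2 * n2 - 1) ^ 2 * k2 ^ 2 + 1)) / (((8 * n2 ^ 2 - 6 * n2 + 1) * k2 ^ 2 + 2) * k1 ^ 2 * n1 ^ 2 + (2 * n2 - 1) * k2 ^ 2)) - 1))) * (y ^ (-((2 * n2 - 1) * k2 ^ 2) / ((8 * n2 ^ 2 - 6 * n2 + 1) * k2 ^ 2 + 2))) := by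
    have hfx : (fun s => H1fun k1 n1 k2 n2 s y)
        = (fun s : ℝ => ((2 * k1 ^ 2 * n1 ^ 2 * ((2 * n2 - 1) ^ 2 * k2 ^ 2 + 1) * ((8 * n2 ^ 2 - 6 * n2 + 1) * k2 ^ 2 + 2)) * s + ((k2 ^ 2 * (2 * n2 - 1) * ((8 * n2 ^ 2 - 6 * n2 + 1) * k1 ^ 2 * k2 ^ 2 * n1 ^ 2 + 2 * k1 ^ 2 * n1 ^ 2 + (2 * n2 - 1) * k2 ^ 2)) * y + (2 * k2 ^ 2 * (2 * n2 - 1) * ((2 * n2 - 1) ^ 2 * k2 ^ 2 + 1)))) * s ^ (-(2 * k1 ^ 2 * n1 ^ 2 * ((2 * n2 - 1) ^ 2 * k2 ^ 2 + 1)) / (((8 * n2 ^ 2 - 6 * n2 + 1) * k2 ^ 2 + 2) * k1 ^ 2 * n1 ^ 2 + (2 * n2 - 1) * k2 ^ 2)) * (y ^ (-((2 * n2 - 1) * k2 ^ 2) / ((8 * n2 ^ 2 - 6 * n2 + 1) * k2 ^ 2 + 2)))) := by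
      funext s; simp only [H1fun]; ring
    rw [hfx]
    exact (hasDeriv_aux (2 * k1 ^ 2 * n1 ^ 2 * ((2 * n2 - 1) ^ 2 * k2 ^ 2 + 1) * ((8 * n2 ^ 2 - 6 * n2 + 1) * k2 ^ 2 + 2)) ((k2 ^ 2 * (2 * n2 - 1) * ((8 * n2 ^ 2 - 6 * n2 + 1) * k1 ^ 2 * k2 ^ 2 * n1 ^ 2 + 2 * k1 ^ 2 * n1 ^ 2 + (2 * n2 - 1) * k2 ^ 2)) * y + (2 * k2 ^ 2 * (2 * n2 - 1) * ((2 * n2 - 1) ^ 2 * k2 ^ 2 + 1))) (-(2 * k1 ^ 2 * n1 ^ 2 * ((2 * n2 - 1) ^ 2 * k2 ^ 2 + 1)) / (((8 * n2 ^ 2 - 6 * n2 + 1) * k2 ^ 2 + 2) * k1 ^ 2 * n1 ^ 2 + (2 * n2 - 1) * k2 ^ 2)) (y ^ (-((2 * n2 - 1) * k2 ^ 2) / ((8 * n2 ^ 2 - 6 * n2 + 1) * k2 ^ 2 + 2))) hx0).deriv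
  have hdy : deriv (fun s => H1fun k1 n1 k2 n2 x s) y
      = ((k2 ^ 2 * (2 * n2 - 1) * ((8 * n2 ^ 2 - 6 * n2 + 1) * k1 ^ 2 * k2 ^ 2 * n1 ^ 2 + 2 * k1 ^ 2 * n1 ^ 2 + (2 * n2 - 1) * k2 ^ 2)) * y ^ (-((2 * n2 - 1) * k2 ^ 2) / ((8 * n2 ^ 2 - 6 * n2 + 1) * k2 ^ 2 + 2)) + ((k2 ^ 2 * (2 * n2 - 1) * ((8 * n2 ^ 2 - 6 * n2 + 1) * k1 ^ 2 * k2 ^ 2 * n1 ^ 2 + 2 * k1 ^ 2 * n1 ^ 2 + (2 * n2 - 1) * k2 ^ 2)) * y + ((2 * k1 ^ 2 * n1 ^ 2 * ((2 * n2 - 1) ^ 2 * k2 ^ 2 + 1) * ((8 * n2 ^ 2 - 6 * n2 + 1) * k2 ^ 2 + 2)) * x + (2 * k2 ^ 2 * (2 * n2 - 1) * ((2 * n2 - 1) ^ 2 * k2 ^ 2 + 1)))) * ((-((2 * n2 - 1) * k2 ^ 2) / ((8 * n2 ^ 2 - 6 * n2 + 1) * k2 ^ 2 + 2)) * y ^ ((-((2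 * n2 - 1) * k2 ^ 2) / ((8 * n2 ^ 2 - 6 * n2 + 1) * k2 ^ 2 + 2)) - 1))) * (x ^ (-(2 * k1 ^ 2 * n1 ^ 2 * ((2 * n2 - 1) ^ 2 * k2 ^ 2 + 1)) / (((8 * n2 ^ 2 - 6 * n2 + 1) * k2 ^ 2 + 2) * k1 ^ 2 * n1 ^ 2 + (2 * n2 - 1) * k2 ^ 2))) := by
    have hfy : (fun s => H1fun k1 n1 k2 n2 x s)
        = (fun s : ℝ => ((k2 ^ 2 * (2 * n2 - 1) * ((8 * n2 ^ 2 - 6 * n2 + 1) * k1 ^ 2 * k2 ^ 2 * n1 ^ 2 + 2 * k1 ^ 2 * n1 ^ 2 + (2 * n2 - 1) * k2 ^ 2)) * s + ((2 * k1 ^ 2 * n1 ^ 2 * ((2 * n2 - 1) ^ 2 * k2 ^ 2 + 1) * ((8 * n2 ^ 2 - 6 * n2 + 1) * k2 ^ 2 + 2)) * x + (2 * k2 ^ 2 * (2 * n2 - 1) * ((2 * n2 - 1) ^ 2 * k2 ^ 2 + 1)))) * s ^ (-((2 * n2 - 1) * k2 ^ 2) / ((8 * n2 ^ 2 - 6 *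 n2 + 1) * k2 ^ 2 + 2)) * (x ^ (-(2 * k1 ^ 2 * n1 ^ 2 * ((2 * n2 - 1) ^ 2 * k2 ^ 2 + 1)) / (((8 * n2 ^ 2 - 6 * n2 + 1) * k2 ^ 2 + 2) * k1 ^ 2 * n1 ^ 2 + (2 * n2 - 1) * k2 ^ 2)))) := by
      funext s; simp only [H1fun]; ring
    rw [hfy]
    exact (hasDeriv_aux (k2 ^ 2 * (2 * n2 - 1) * ((8 * n2 ^ 2 - 6 * n2 + 1) * k1 ^ 2 * k2 ^ 2 * n1 ^ 2 + 2 * k1 ^ 2 * n1 ^ 2 + (2 * n2 - 1) * k2 ^ 2)) ((2 * k1 ^ 2 * n1 ^ 2 * ((2 * n2 - 1) ^ 2 * k2 ^ 2 + 1) * ((8 * n2 ^ 2 - 6 * n2 + 1) * k2 ^ 2 + 2)) * x + (2 * k2 ^ 2 * (2 * n2 - 1) * ((2 * n2 - 1) ^ 2 * k2 ^ 2 + 1))) (-((2 * n2 - 1) * k2 ^ 2) / ((8 * n2 ^ 2 - 6 * n2 + 1) * k2 ^ 2 + 2)) (x ^ (-(2 * k1 ^ 2 * n1 ^ 2 * ((2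 * n2 - 1) ^ 2 * k2 ^ 2 + 1)) / (((8 * n2 ^ 2 - 6 * n2 + 1) * k2 ^ 2 + 2) * k1 ^ 2 * n1 ^ 2 + (2 * n2 - 1) * k2 ^ 2))) hy0).deriv
  have hE : (((((8 * n2 ^ 2 - 6 * n2 + 1) * k2 ^ 2 + 2) * (k1 * n1) ^ 2 + (2 * n2 - 1) * k2 ^ 2) * (2 * (k1 * n1) ^ 2 * ((2 * n2 - 1) ^ 2 * k2 ^ 2 + 1) * ((8 * n2 ^ 2 - 6 * n2 + 1) * k2 ^ 2 + 2)) * x - ((2 * (k1 * n1) ^ 2 * ((2 * n2 - 1) ^ 2 * k2 ^ 2 + 1) * ((8 * n2 ^ 2 - 6 * n2 + 1) * k2 ^ 2 + 2)) * x + (k2 ^ 2 * (2 * n2 - 1) * ((8 * n2 ^ 2 - 6 * n2 + 1) * (k1 * n1) ^ 2 * k2 ^ 2 + 2 * (k1 * n1) ^ 2 + (2 * n2 - 1) * k2 ^ 2)) * y + (2 * k2 ^ 2 * (2 * n2 - 1) * ((2 * n2 - 1) ^ 2 * k2 ^ 2 + 1))) * (2 * (k1 * n1) ^ 2 * ((2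 * n2 - 1) ^ 2 * k2 ^ 2 + 1))) * ((8 * n2 ^ 2 - 6 * n2 + 1) * k2 ^ 2 + 2) * e1 * ((k1 * n1) + e1 - (k1 * n1) * x - e1 * y) + (((8 * n2 ^ 2 - 6 * n2 + 1) * k2 ^ 2 + 2) * (k2 ^ 2 * (2 * n2 - 1) * ((8 * n2 ^ 2 - 6 * n2 + 1) * (k1 * n1) ^ 2 * k2 ^ 2 + 2 * (k1 * n1) ^ 2 + (2 * n2 - 1) * k2 ^ 2)) * y - ((2 * (k1 * n1) ^ 2 * ((2 * n2 - 1) ^ 2 * k2 ^ 2 + 1) * ((8 * n2 ^ 2 - 6 * n2 + 1) * k2 ^ 2 + 2)) * x + (k2 ^ 2 * (2 * n2 - 1) * ((8 * n2 ^ 2 - 6 * n2 + 1) * (k1 * n1) ^ 2 * k2 ^ 2 + 2 * (k1 * n1) ^ 2 + (2 * n2 - 1) * k2 ^ 2)) * y + (2 * k2 ^ 2 * (2 * n2 - 1) * ((2 * n2 - 1) ^ 2 * k2 ^ 2 + 1))) * ((2 * n2 - 1) * k2 ^ 2)) * (((8 * n2 ^ 2 - 6 * n2 + 1) * k2 ^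 2 + 2) * (k1 * n1) ^ 2 + (2 * n2 - 1) * k2 ^ 2) * ((k1 * n1) ^ 2 * x + x + e1 * (k1 * n1) * y - ((k1 * n1) ^ 2 + e1 * (k1 * n1) + 1))) = 0 :=
    hEaux (k1 * n1) e1 e2 k2 n2 x y (by linear_combination hV2) hV3
  have hbr : ((2 * k1 ^ 2 * n1 ^ 2 * ((2 * n2 - 1) ^ 2 * k2 ^ 2 + 1) * ((8 * n2 ^ 2 - 6 * n2 + 1) * k2 ^ 2 + 2)) * x + ((2 * k1 ^ 2 * n1 ^ 2 * ((2 * n2 - 1) ^ 2 * k2 ^ 2 + 1) * ((8 * n2 ^ 2 - 6 * n2 + 1) * k2 ^ 2 + 2)) * x + (k2 ^ 2 * (2 * n2 - 1) * ((8 * n2 ^ 2 - 6 * n2 + 1) * k1 ^ 2 * k2 ^ 2 * n1 ^ 2 + 2 * k1 ^ 2 * n1 ^ 2 + (2 * n2 - 1) * k2 ^ 2)) * y + (2 * k2 ^ 2 * (2 * n2 - 1) * ((2 * n2 - 1) ^ 2 * k2 ^ 2 + 1))) * (-(2 * k1 ^ 2 * n1 ^ 2 * ((2 * n2 - 1) ^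 2 * k2 ^ 2 + 1)) / (((8 * n2 ^ 2 - 6 * n2 + 1) * k2 ^ 2 + 2) * k1 ^ 2 * n1 ^ 2 + (2 * n2 - 1) * k2 ^ 2))) * (k1 * (1 - n1 * x) - e1 * y - (-(k1 * n1) - e1 + k1)) + ((k2 ^ 2 * (2 * n2 - 1) * ((8 * n2 ^ 2 - 6 * n2 + 1) * k1 ^ 2 * k2 ^ 2 * n1 ^ 2 + 2 * k1 ^ 2 * n1 ^ 2 + (2 * n2 - 1) * k2 ^ 2)) * y + ((2 * k1 ^ 2 * n1 ^ 2 * ((2 * n2 - 1) ^ 2 * k2 ^ 2 + 1) * ((8 * n2 ^ 2 - 6 * n2 + 1) * k2 ^ 2 + 2)) * x + (k2 ^ 2 * (2 * n2 - 1) * ((8 * n2 ^ 2 - 6 * n2 + 1) * k1 ^ 2 * k2 ^ 2 * n1 ^ 2 + 2 * k1 ^ 2 * n1 ^ 2 + (2 * n2 - 1) * k2 ^ 2)) * y + (2 * k2 ^ 2 * (2 * n2 - 1) * ((2 * n2 - 1) ^ 2 * k2 ^ 2 + 1))) * (-((2 * n2 - 1) * k2 ^ 2) / ((8 * n2 ^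 2 - 6 * n2 + 1) * k2 ^ 2 + 2))) * (e1 * ((k1 ^ 2 * n1 ^ 2 + 1) / e1 ^ 2) * x - (-(k1 * n1)) * y - ((k1 ^ 2 * n1 ^ 2 + e1 * k1 * n1 + 1) / e1)) = 0 := by
    have h2 : (((2 * k1 ^ 2 * n1 ^ 2 * ((2 * n2 - 1) ^ 2 * k2 ^ 2 + 1) * ((8 * n2 ^ 2 - 6 * n2 + 1) * k2 ^ 2 + 2)) * x + ((2 * k1 ^ 2 * n1 ^ 2 * ((2 * n2 - 1) ^ 2 * k2 ^ 2 + 1) * ((8 * n2 ^ 2 - 6 * n2 + 1) * k2 ^ 2 + 2)) * x + (k2 ^ 2 * (2 * n2 - 1) * ((8 * n2 ^ 2 - 6 * n2 + 1) * k1 ^ 2 * k2 ^ 2 * n1 ^ 2 + 2 * k1 ^ 2 * n1 ^ 2 + (2 * n2 - 1) * k2 ^ 2)) * y + (2 * k2 ^ 2 * (2 * n2 - 1) * ((2 * n2 - 1) ^ 2 * k2 ^ 2 + 1))) * (-(2 * k1 ^ 2 * n1 ^ 2 * ((2 * n2 - 1) ^ 2 * k2 ^ 2 + 1)) / (((8 *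 n2 ^ 2 - 6 * n2 + 1) * k2 ^ 2 + 2) * k1 ^ 2 * n1 ^ 2 + (2 * n2 - 1) * k2 ^ 2))) * (k1 * (1 - n1 * x) - e1 * y - (-(k1 * n1) - e1 + k1)) + ((k2 ^ 2 * (2 * n2 - 1) * ((8 * n2 ^ 2 - 6 * n2 + 1) * k1 ^ 2 * k2 ^ 2 * n1 ^ 2 + 2 * k1 ^ 2 * n1 ^ 2 + (2 * n2 - 1) * k2 ^ 2)) * y + ((2 * k1 ^ 2 * n1 ^ 2 * ((2 * n2 - 1) ^ 2 * k2 ^ 2 + 1) * ((8 * n2 ^ 2 - 6 * n2 + 1) * k2 ^ 2 + 2)) * x + (k2 ^ 2 * (2 * n2 - 1) * ((8 * n2 ^ 2 - 6 * n2 + 1) * k1 ^ 2 * k2 ^ 2 * n1 ^ 2 + 2 * k1 ^ 2 * n1 ^ 2 + (2 * n2 - 1) * k2 ^ 2)) * y + (2 * k2 ^ 2 * (2 * n2 - 1) * ((2 * n2 - 1) ^ 2 * k2 ^ 2 + 1))) * (-((2 * n2 - 1) * k2 ^ 2) / ((8 * n2 ^ 2 - 6 * n2 + 1) * k2 ^ 2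 + 2))) * (e1 * ((k1 ^ 2 * n1 ^ 2 + 1) / e1 ^ 2) * x - (-(k1 * n1)) * y - ((k1 ^ 2 * n1 ^ 2 + e1 * k1 * n1 + 1) / e1))) = (((((8 * n2 ^ 2 - 6 * n2 + 1) * k2 ^ 2 + 2) * (k1 * n1) ^ 2 + (2 * n2 - 1) * k2 ^ 2) * (2 * (k1 * n1) ^ 2 * ((2 * n2 - 1) ^ 2 * k2 ^ 2 + 1) * ((8 * n2 ^ 2 - 6 * n2 + 1) * k2 ^ 2 + 2)) * x - ((2 * (k1 * n1) ^ 2 * ((2 * n2 - 1) ^ 2 * k2 ^ 2 + 1) * ((8 * n2 ^ 2 - 6 * n2 + 1) * k2 ^ 2 + 2)) * x + (k2 ^ 2 * (2 * n2 - 1) * ((8 * n2 ^ 2 - 6 * n2 + 1) * (k1 * n1) ^ 2 * k2 ^ 2 + 2 * (k1 * n1) ^ 2 + (2 * n2 - 1) * k2 ^ 2)) * y + (2 * k2 ^ 2 * (2 * n2 - 1) * ((2 * n2 - 1) ^ 2 * k2 ^ 2 + 1))) * (2 * (k1 * n1) ^ 2 * ((2 * n2 - 1) ^ 2 * k2 ^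 2 + 1))) * ((8 * n2 ^ 2 - 6 * n2 + 1) * k2 ^ 2 + 2) * e1 * ((k1 * n1) + e1 - (k1 * n1) * x - e1 * y) + (((8 * n2 ^ 2 - 6 * n2 + 1) * k2 ^ 2 + 2) * (k2 ^ 2 * (2 * n2 - 1) * ((8 * n2 ^ 2 - 6 * n2 + 1) * (k1 * n1) ^ 2 * k2 ^ 2 + 2 * (k1 * n1) ^ 2 + (2 * n2 - 1) * k2 ^ 2)) * y - ((2 * (k1 * n1) ^ 2 * ((2 * n2 - 1) ^ 2 * k2 ^ 2 + 1) * ((8 * n2 ^ 2 - 6 * n2 + 1) * k2 ^ 2 + 2)) * x + (k2 ^ 2 * (2 * n2 - 1) * ((8 * n2 ^ 2 - 6 * n2 + 1) * (k1 * n1) ^ 2 * k2 ^ 2 + 2 * (k1 * n1) ^ 2 + (2 * n2 - 1) * k2 ^ 2)) * y + (2 * k2 ^ 2 * (2 * n2 - 1) * ((2 * n2 - 1) ^ 2 * k2 ^ 2 + 1))) * ((2 * n2 - 1) * k2 ^ 2)) * (((8 * n2 ^ 2 - 6 * n2 + 1) * k2 ^ 2 + 2) * (k1 * n1) ^ 2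 + (2 * n2 - 1) * k2 ^ 2) * ((k1 * n1) ^ 2 * x + x + e1 * (k1 * n1) * y - ((k1 * n1) ^ 2 + e1 * (k1 * n1) + 1))) / ((((8 * n2 ^ 2 - 6 * n2 + 1) * k2 ^ 2 + 2) * k1 ^ 2 * n1 ^ 2 + (2 * n2 - 1) * k2 ^ 2) * ((8 * n2 ^ 2 - 6 * n2 + 1) * k2 ^ 2 + 2) * e1) := by
      have hδ' : k2 ^ 2 * (n2 * (n2 * 8 - 6) + 1) + 2 ≠ 0 := by convert hδ using 1; ring
      have hρ' : k1 ^ 2 * n1 ^ 2 * (k2 ^ 2 * (n2 * (n2 * 8 - 6) + 1) + 2) + (2 * n2 - 1) * k2 ^ 2 ≠ 0 := by convert hρ using 1; ring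
      field_simp
      ring
    rw [h2, hE, zero_div]
  rw [hdx, hdy, hh, hp, hs, hw, Real.rpow_sub hx, Real.rpow_sub hy, Real.rpow_one, Real.rpow_one]
  set Bv := (-(2 * k1 ^ 2 * n1 ^ 2 * ((2 * n2 - 1) ^ 2 * k2 ^ 2 + 1)) / (((8 * n2 ^ 2 - 6 * n2 + 1) * k2 ^ 2 + 2) * k1 ^ 2 * n1 ^ 2 + (2 * n2 - 1) * k2 ^ 2)) with hBv
  set Cv := (-((2 * n2 - 1) * k2 ^ 2) / ((8 * n2 ^ 2 - 6 * n2 + 1) * k2 ^ 2 + 2)) with hCv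
  set X := x ^ Bv with hX
  set Y := y ^ Cv with hY
  set av := (2 * k1 ^ 2 * n1 ^ 2 * ((2 * n2 - 1) ^ 2 * k2 ^ 2 + 1) * ((8 * n2 ^ 2 - 6 * n2 + 1) * k2 ^ 2 + 2)) with hav
  set bv := (k2 ^ 2 * (2 * n2 - 1) * ((8 * n2 ^ 2 - 6 * n2 + 1) * k1 ^ 2 * k2 ^ 2 * n1 ^ 2 + 2 * k1 ^ 2 * n1 ^ 2 + (2 * n2 - 1) * k2 ^ 2)) with hbv
  set cv := (2 * k2 ^ 2 * (2 * n2 - 1) * ((2 * n2 - 1) ^ 2 * k2 ^ 2 + 1)) with hcv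
  linear_combination (norm := (field_simp; ring)) (X * Y) * hbr
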